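/- Assume 0 < r_f < 1. For every α ∈ ℝ, the critical Jacobi energy for retrograde insertion satisfies C_R*(α) ≥ 3(1−μ) − (1−μ)·r_f² − 2√(2μ·r_f), and equality holds if and only if cos α = −r_f/2. In particular, the global minimum of C_R* over ℝ equals 3(1−μ) − (1−μ)·r_f² − 2√(2μ·r_f). -/

import Mathlib

/-- The function G(α). -/
noncomputable def Gfun (μ rf α : ℝ) : ℝ :=
  2 * rf ^ 2 + 2 * (1 - μ) * (rf * Real.cos α + 1 - μ)
    + (1 - μ) * (2 * μ - 1)
    + 2 * (1 - μ) / Real.sqrt (1 + 2 * rf * Real.cos α + rf ^ 2)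

/-- Critical Jacobi energy for retrograde insertion. -/
noncomputable def CRstar (μ rf α : ℝ) : ℝ :=
  Gfun μ rf α - 2 * rf ^ 2 - 2 * Real.sqrt (2 * μ * rf)

private lemma key_u (u : ℝ) (hu : 0 < u) :
    3 ≤ u ^ 2 + 2 / u ∧ (u ^ 2 + 2 / u = 3 ↔ u = 1) := by
  have h : u ^ 2 + 2 / u - 3 = (u - 1) ^ 2 * (u + 2) / u := by
    field_simp; ring
  have hnum : 0 ≤ (u - 1) ^ 2 * (u + 2) := by positivity
  constructor
  · nlinarith [div_nonneg hnum hu.le]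
  · constructor
    · intro he
      have : (u - 1) ^ 2 * (u + 2) / u = 0 := by linarith [h, he]
      have h2 : (u - 1) ^ 2 * (u + 2) = 0 := by
        field_simp at this; linarith
      have h3 : (u - 1) ^ 2 = 0 := by
        rcases mul_eq_zero.1 h2 with h' | h'
        · exact h'
        · nlinarith
      nlinarith [pow_eq_zero_iff (n := 2) (two_ne_zero) |>.1 h3]
    · intro he; rw [he]; norm_num

theorem CRstar_global_minimum
    (μ rf : ℝ) (hμ0 : 0 < μ) (hμ1 : μ < 1) (hrf0 : 0 < rf) (hrf1 : rf < 1) :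
    (∀ α : ℝ,
      3 * (1 - μ) - (1 - μ) * rf ^ 2 - 2 * Real.sqrt (2 * μ * rf) ≤ CRstar μ rf α
      ∧ (CRstar μ rf α = 3 * (1 - μ) - (1 - μ) * rf ^ 2 - 2 * Real.sqrt (2 * μ * rf)
          ↔ Real.cos α = -rf / 2))
    ∧ IsLeast (Set.range (CRstar μ rf))
        (3 * (1 - μ) - (1 - μ) * rf ^ 2 - 2 * Real.sqrt (2 * μ * rf)) := by
  have hμ : 0 < 1 - μ := by linarith
  have main : ∀ α : ℝ,
      3 * (1 - μ) - (1 - μ) * rf ^ 2 - 2 * Real.sqrt (2 * μ * rf) ≤ CRstar μ rf α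
      ∧ (CRstar μ rf α = 3 * (1 - μ) - (1 - μ) * rf ^ 2 - 2 * Real.sqrt (2 * μ * rf)
          ↔ Real.cos α = -rf / 2) := by
    intro α
    set c := Real.cos α with hc
    have hc1 : -1 ≤ c := Real.neg_one_le_cos α
    have hs0 : 0 < 1 + 2 * rf * c + rf ^ 2 := by nlinarith
    set s := 1 + 2 * rf * c + rf ^ 2 with hs
    set u := Real.sqrt s with hu
    have hu0 : 0 < u := Real.sqrt_pos.2 hs0
    have hu2 : u ^ 2 = s := Real.sq_sqrt hs0.le
    have hform : CRstar μ rf α = (1 - μ) * (u ^ 2 + 2 / u - rf ^ 2)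
        - 2 * Real.sqrt (2 * μ * rf) := by
      rw [CRstar, Gfun, show Real.sqrt (1 + 2 * rf * Real.cos α + rf ^ 2) = u from rfl, hu2]
      field_simp
      rw [hs, hc]
      ring
    obtain ⟨hineq, hiff⟩ := key_u u hu0
    constructor
    · rw [hform]; nlinarith
    · rw [hform]
      constructor
      · intro he
        have h3 : u ^ 2 + 2 / u = 3 := by nlinarith
        have hu1 : u = 1 := hiff.1 h3
        have hs1 : s = 1 := by rw [← hu2, hu1]; norm_num
        have : 2 * rf * c + rf ^ 2 = 0 := by
          have := hs ▸ hs1; linarith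
        field_simp
        nlinarith
      · intro he
        have hs1 : s = 1 := by rw [hs, he]; ring
        have hu1 : u = 1 := by rw [hu, hs1, Real.sqrt_one]
        rw [hu1]; norm_num; ring
  refine ⟨main, ?_, ?_⟩
  · have hmem : -rf / 2 ∈ Set.Icc (-1 : ℝ) 1 := by
      constructor <;> [nlinarith; nlinarith]
    refine ⟨Real.arccos (-rf / 2), ?_⟩
    have hcos : Real.cos (Real.arccos (-rf / 2)) = -rf / 2 :=
      Real.cos_arccos hmem.1 hmem.2
    exact ((main (Real.arccos (-rf / 2))).2.2 hcos)
  · rintro x ⟨α, rfl⟩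
    exact (main α).1
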